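/- arXiv:1905.02650 — 3 statements merged into one kernel-verified Lean document; each statement's English description precedes it below -/
import Mathlib

section
/- Let Λ be defined on continuous f : ℝ^d → ℝ_+ by (Λf)(x) = ∫₀^∞ e^{-rt} E_x[p ψ(X_t) + (1−p) f(X_t)] F(dt), where sup_x E_x[e^{-2rt}(1+|X_t|²)] ≤ 1+|x|² for all t (supermartingale-type bound). Then for f, g with finite weighted norm ‖·‖ (with weight (1+|x|²)^{1/2}), one has ‖Λf − Λg‖ ≤ (1−p)‖f − g‖. -/
/-!
For each time `t ≥ 0` the `ψ`-terms cancel, leaving `(1 - p) e^{-rt} |E_x[f(X_t) - g(X_t)]|`.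
Bounding `|f - g|` by `C (1 + |y|²)^{1/2}` and applying Jensen's inequality to the concave square
root gives `E_x[(1 + |X_t|²)^{1/2}] ≤ (E_x[1 + |X_t|²])^{1/2} ≤ e^{rt} (1 + |x|²)^{1/2}` by the
moment bound, so the factor `e^{rt}` exactly cancels the discount `e^{-rt}`. Integrating the
resulting uniform bound against the probability measure `F` gives the contraction.
-/

open MeasureTheory Set

section Jensen

variable {α : Type*} [MeasurableSpace α] {μ : Measure α} {h : α → ℝ}

lemma sqrt_le_one_add_abs (x : ℝ) : √x ≤ 1 + |x| :=
  Real.sqrt_le_iff.2 ⟨by positivity, by nlinarith [abs_nonneg x, le_abs_self x]⟩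

lemma MeasureTheory.Integrable.sqrt [IsFiniteMeasure μ] (hh : Integrable h μ) :
    Integrable (fun a => √(h a)) μ := by
  refine ((integrable_const 1).add hh.norm).mono'
    (Real.continuous_sqrt.comp_aestronglyMeasurable hh.aestronglyMeasurable) ?_
  filter_upwards with a
  rw [Real.norm_eq_abs, abs_of_nonneg (Real.sqrt_nonneg _)]
  exact sqrt_le_one_add_abs (h a)

lemma integral_sqrt_le_sqrt_integral [IsProbabilityMeasure μ] (hh : Integrable h μ)
    (h0 : ∀ᵐ a ∂μ, 0 ≤ h a) : ∫ a, √(h a) ∂μ ≤ √(∫ a, h a ∂μ) :=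
  Real.strictConcaveOn_sqrt.concaveOn.le_map_integral Real.continuous_sqrt.continuousOn
    isClosed_Ici h0 hh hh.sqrt

lemma abs_integral_le_mul_sqrt_integral [IsProbabilityMeasure μ] {u V : α → ℝ} {C : ℝ}
    (hC0 : 0 ≤ C) (hu : Integrable u μ) (hV : Integrable V μ) (hV0 : ∀ a, 0 ≤ V a)
    (huV : ∀ a, |u a| ≤ C * √(V a)) : |∫ a, u a ∂μ| ≤ C * √(∫ a, V a ∂μ) :=
  calc |∫ a, u a ∂μ| ≤ ∫ a, |u a| ∂μ := abs_integral_le_integral_abs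
    _ ≤ ∫ a, C * √(V a) ∂μ := integral_mono hu.abs (hV.sqrt.const_mul C) huV
    _ = C * ∫ a, √(V a) ∂μ := integral_const_mul C _
    _ ≤ C * √(∫ a, V a ∂μ) :=
      mul_le_mul_of_nonneg_left (integral_sqrt_le_sqrt_integral hV (.of_forall hV0)) hC0

end Jensen

lemma sqrt_le_exp_mul_sqrt {a b : ℝ} (s : ℝ) (hab : Real.exp (-2 * s) * a ≤ b) :
    √a ≤ Real.exp s * √b := by
  have ha : a ≤ Real.exp s ^ 2 * b := by
    calc a = Real.exp s ^ 2 * (Real.exp (-2 * s) * a) := by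
          rw [← Real.exp_nat_mul, ← mul_assoc, ← Real.exp_add]; norm_num
      _ ≤ Real.exp s ^ 2 * b := by gcongr
  calc √a ≤ √(Real.exp s ^ 2 * b) := Real.sqrt_le_sqrt ha
    _ = Real.exp s * √b := by rw [Real.sqrt_mul (by positivity), Real.sqrt_sq (Real.exp_nonneg s)]

lemma integral_mix_sub_integral_mix {α : Type*} [MeasurableSpace α] {ν : Measure α}
    {ψ f g : α → ℝ} (p : ℝ) (hψ : Integrable ψ ν) (hf : Integrable f ν) (hg : Integrable g ν) :
    ∫ y, (p * ψ y + (1 - p) * f y) ∂ν - ∫ y, (p * ψ y + (1 - p) * g y) ∂ν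
      = (1 - p) * ∫ y, (f y - g y) ∂ν := by
  rw [integral_add (hψ.const_mul p) (hf.const_mul (1 - p)),
    integral_add (hψ.const_mul p) (hg.const_mul (1 - p)), integral_sub hf hg,
    integral_const_mul, integral_const_mul, integral_const_mul]
  ring

lemma exp_neg_mul_abs_integral_sub_le {E : Type*} [NormedAddCommGroup E] [MeasurableSpace E]
    {ν : Measure E} [IsProbabilityMeasure ν] {f g : E → ℝ} {C s : ℝ} (x : E)
    (hC0 : 0 ≤ C) (hf : Integrable f ν) (hg : Integrable g ν)
    (hC : ∀ y, |f y - g y| ≤ C * √(1 + ‖y‖ ^ 2))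
    (hmomInt : Integrable (fun y => 1 + ‖y‖ ^ 2) ν)
    (hmom : ∫ y, Real.exp (-2 * s) * (1 + ‖y‖ ^ 2) ∂ν ≤ 1 + ‖x‖ ^ 2) :
    Real.exp (-s) * |∫ y, (f y - g y) ∂ν| ≤ C * √(1 + ‖x‖ ^ 2) := by
  rw [integral_const_mul] at hmom
  calc Real.exp (-s) * |∫ y, (f y - g y) ∂ν|
      ≤ Real.exp (-s) * (C * √(∫ y, 1 + ‖y‖ ^ 2 ∂ν)) := by
        gcongr
        exact abs_integral_le_mul_sqrt_integral hC0 (hf.sub hg) hmomInt (fun y => by positivity) hC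
    _ ≤ Real.exp (-s) * (C * (Real.exp s * √(1 + ‖x‖ ^ 2))) := by
        gcongr
        exact sqrt_le_exp_mul_sqrt s hmom
    _ = C * √(1 + ‖x‖ ^ 2) * (Real.exp (-s) * Real.exp s) := by ring
    _ = C * √(1 + ‖x‖ ^ 2) := by rw [← Real.exp_add, neg_add_cancel, Real.exp_zero, mul_one]

lemma abs_integral_sub_le_of_ae_abs_sub_le {α : Type*} [MeasurableSpace α] {μ : Measure α}
    [IsProbabilityMeasure μ] {a b : α → ℝ} {K : ℝ} (ha : Integrable a μ) (hb : Integrable b μ)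
    (hab : ∀ᵐ t ∂μ, |a t - b t| ≤ K) : |∫ t, a t ∂μ - ∫ t, b t ∂μ| ≤ K := by
  simpa [integral_sub ha hb] using norm_integral_le_of_norm_le_const (f := fun t => a t - b t) hab

theorem stmt3_general {d : ℕ} (r p : ℝ) (hp : p ∈ Set.Ioo (0 : ℝ) 1)
    (μ : ℝ → EuclideanSpace ℝ (Fin d) → Measure (EuclideanSpace ℝ (Fin d)))
    (hprob : ∀ t x, IsProbabilityMeasure (μ t x))
    (F : Measure ℝ) [IsProbabilityMeasure F] (hF : F (Set.Iio 0) = 0)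
    (ψ f g : EuclideanSpace ℝ (Fin d) → ℝ)
    (hmom : ∀ t ≥ (0 : ℝ), ∀ x,
      ∫ y, Real.exp (-2 * r * t) * (1 + ‖y‖ ^ 2) ∂(μ t x) ≤ 1 + ‖x‖ ^ 2)
    (hmomInt : ∀ t x, Integrable (fun y => 1 + ‖y‖ ^ 2) (μ t x))
    (hintψ : ∀ t x, Integrable ψ (μ t x))
    (hintf : ∀ t x, Integrable f (μ t x))
    (hintg : ∀ t x, Integrable g (μ t x))
    (houtf : ∀ x, Integrable
      (fun t => Real.exp (-r * t) * ∫ y, (p * ψ y + (1 - p) * f y) ∂(μ t x)) F)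
    (houtg : ∀ x, Integrable
      (fun t => Real.exp (-r * t) * ∫ y, (p * ψ y + (1 - p) * g y) ∂(μ t x)) F)
    (C : ℝ) (hC : ∀ x, |f x - g x| ≤ C * Real.sqrt (1 + ‖x‖ ^ 2)) :
    ∀ x, |(∫ t, Real.exp (-r * t) * ∫ y, (p * ψ y + (1 - p) * f y) ∂(μ t x) ∂F)
        - (∫ t, Real.exp (-r * t) * ∫ y, (p * ψ y + (1 - p) * g y) ∂(μ t x) ∂F)|
      ≤ (1 - p) * C * Real.sqrt (1 + ‖x‖ ^ 2) := by
  intro x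
  have h1p : 0 ≤ 1 - p := sub_nonneg.2 hp.2.le
  have hC0 : 0 ≤ C :=
    nonneg_of_mul_nonneg_left ((abs_nonneg _).trans (hC 0)) (Real.sqrt_pos.2 (by positivity))
  have hF_nonneg : ∀ᵐ t ∂F, 0 ≤ t := by
    filter_upwards [measure_eq_zero_iff_ae_notMem.1 hF] with t ht
    simpa using ht
  refine abs_integral_sub_le_of_ae_abs_sub_le (houtf x) (houtg x) ?_
  filter_upwards [hF_nonneg] with t ht
  have := hprob t x
  have hbound := exp_neg_mul_abs_integral_sub_le x hC0 (hintf t x) (hintg t x) hC (hmomInt t x)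
    (s := r * t) (by rw [← mul_assoc]; exact hmom t ht x)
  rw [← mul_sub, integral_mix_sub_integral_mix p (hintψ t x) (hintf t x) (hintg t x), abs_mul,
    abs_mul, abs_of_nonneg (Real.exp_nonneg _), abs_of_nonneg h1p, neg_mul,
    mul_left_comm, mul_assoc]
  exact mul_le_mul_of_nonneg_left hbound h1p

/-- The operator `Λ` defined by
`(Λ f)(x) = ∫₀^∞ e^{-rt} E_x[p ψ(X_t) + (1-p) f(X_t)] F(dt)`
is a `(1-p)`-contraction in the weighted sup-norm with weight `(1+‖x‖²)^{1/2}`,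
under the supermartingale-type moment bound `E_x[e^{-2rt}(1+‖X_t‖²)] ≤ 1+‖x‖²`. -/
theorem stmt3 {d : ℕ} (r p : ℝ) (hr : 0 < r) (hp : p ∈ Set.Ioo (0 : ℝ) 1)
    (μ : ℝ → EuclideanSpace ℝ (Fin d) → Measure (EuclideanSpace ℝ (Fin d)))
    (hprob : ∀ t x, IsProbabilityMeasure (μ t x))
    (F : Measure ℝ) [IsProbabilityMeasure F] (hF : F (Set.Iio 0) = 0)
    (ψ f g : EuclideanSpace ℝ (Fin d) → ℝ)
    (hψc : Continuous ψ) (hψ0 : ∀ x, 0 ≤ ψ x)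
    (hfc : Continuous f) (hf0 : ∀ x, 0 ≤ f x)
    (hgc : Continuous g) (hg0 : ∀ x, 0 ≤ g x)
    (hmom : ∀ t ≥ (0 : ℝ), ∀ x,
      ∫ y, Real.exp (-2 * r * t) * (1 + ‖y‖ ^ 2) ∂(μ t x) ≤ 1 + ‖x‖ ^ 2)
    (hmomInt : ∀ t x, Integrable (fun y => 1 + ‖y‖ ^ 2) (μ t x))
    (hintψ : ∀ t x, Integrable ψ (μ t x))
    (hintf : ∀ t x, Integrable f (μ t x))
    (hintg : ∀ t x, Integrable g (μ t x))
    (houtf : ∀ x, Integrable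
      (fun t => Real.exp (-r * t) * ∫ y, (p * ψ y + (1 - p) * f y) ∂(μ t x)) F)
    (houtg : ∀ x, Integrable
      (fun t => Real.exp (-r * t) * ∫ y, (p * ψ y + (1 - p) * g y) ∂(μ t x)) F)
    (C : ℝ) (hC : ∀ x, |f x - g x| ≤ C * Real.sqrt (1 + ‖x‖ ^ 2)) :
    ∀ x, |(∫ t, Real.exp (-r * t) * ∫ y, (p * ψ y + (1 - p) * f y) ∂(μ t x) ∂F)
        - (∫ t, Real.exp (-r * t) * ∫ y, (p * ψ y + (1 - p) * g y) ∂(μ t x) ∂F)|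
      ≤ (1 - p) * C * Real.sqrt (1 + ‖x‖ ^ 2) :=
  stmt3_general r p hp μ hprob F hF ψ f g hmom hmomInt hintψ hintf hintg houtf houtg C hC
end

section
/- Under the assumption that e^{-2r(1−ρ)t}(1+|X_t|²) is a supermartingale for some ρ ∈ (0,1), the operator Λ maps the weighted space A_d into itself: if f ∈ A_d then Λf is continuous, nonnegative, and satisfies |(Λf)(x)| ≤ (p‖ψ‖ + (1−p)‖f‖)(1+|x|²)^{1/2} for all x. -/
/-! For `t ≥ 0`, Jensen's inequality and the moment bound give
`|E h(X_t^x)| ≤ C (E[1 + |X_t^x|²])^{1/2} ≤ C e^{rt} (1 + |x|²)^{1/2}`, where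
`h = pψ + (1-p)f` and `C = pCψ + (1-p)Cf`; the discount `e^{-rt}` cancels the growth, which gives
the bound on `Λf`. Continuity of `x ↦ E h(X_t^x)` follows by truncation: each `min h n` is
handled by dominated convergence, and the truncation error is at most `C² E[1 + |X_t^x|²] / n`,
uniformly for `x` near a given point. Continuity of `Λf` is then dominated convergence in `t`. -/

open MeasureTheory Set Filter Topology

section SecondMoment

variable {Ω : Type*} [MeasurableSpace Ω] {P : Measure Ω}

theorem integrable_sq_of_sq_le {g m : Ω → ℝ} (hg : AEStronglyMeasurable g P)
    (hsq : ∀ ω, g ω ^ 2 ≤ m ω) (hm : Integrable m P) : Integrable (fun ω => g ω ^ 2) P :=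
  hm.mono' (hg.pow 2) <| ae_of_all _ fun ω => by
    rw [Real.norm_eq_abs, abs_of_nonneg (sq_nonneg _)]
    exact hsq ω

theorem integrable_of_sq_le [IsFiniteMeasure P] {g m : Ω → ℝ} (hg : AEStronglyMeasurable g P)
    (hsq : ∀ ω, g ω ^ 2 ≤ m ω) (hm : Integrable m P) : Integrable g P :=
  ((memLp_two_iff_integrable_sq hg).2 (integrable_sq_of_sq_le hg hsq hm)).integrable one_le_two

theorem abs_integral_le_sqrt_integral_of_sq_le [IsProbabilityMeasure P] {g m : Ω → ℝ}
    (hg : AEStronglyMeasurable g P) (hsq : ∀ ω, g ω ^ 2 ≤ m ω) (hm : Integrable m P) :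
    |∫ ω, g ω ∂P| ≤ √(∫ ω, m ω ∂P) := by
  have hg2 := integrable_sq_of_sq_le hg hsq hm
  have jensen : (∫ ω, g ω ∂P) ^ 2 ≤ ∫ ω, g ω ^ 2 ∂P :=
    (even_two.convexOn_pow (𝕜 := ℝ)).map_integral_le (continuous_pow 2).continuousOn
      isClosed_univ (ae_of_all _ fun _ => mem_univ _) (integrable_of_sq_le hg hsq hm) hg2
  exact Real.abs_le_sqrt (jensen.trans (integral_mono hg2 hm hsq))

theorem sub_min_le_sq_div {a n : ℝ} (ha : 0 ≤ a) (hn : 0 < n) : a - min a n ≤ a ^ 2 / n := by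
  rcases le_total a n with han | hna
  · rw [min_eq_left han, sub_self]
    positivity
  · rw [min_eq_right hna, le_div_iff₀ hn]
    nlinarith

theorem dist_integral_min_le [IsFiniteMeasure P] {g m : Ω → ℝ} (hg : AEStronglyMeasurable g P)
    (hg0 : ∀ ω, 0 ≤ g ω) (hsq : ∀ ω, g ω ^ 2 ≤ m ω) (hm : Integrable m P) {n : ℝ} (hn : 0 < n) :
    dist (∫ ω, g ω ∂P) (∫ ω, min (g ω) n ∂P) ≤ (∫ ω, m ω ∂P) / n := by
  have hgi := integrable_of_sq_le hg hsq hm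
  have hmin : Integrable (fun ω => min (g ω) n) P :=
    hgi.mono' (hg.inf aestronglyMeasurable_const) <| ae_of_all _ fun ω => by
      rw [Real.norm_eq_abs, abs_of_nonneg (le_min (hg0 ω) hn.le)]
      exact min_le_left _ _
  rw [Real.dist_eq, ← integral_sub hgi hmin, ← integral_div,
    abs_of_nonneg (integral_nonneg fun ω => sub_nonneg.2 (min_le_left _ _))]
  exact integral_mono (hgi.sub hmin) (hm.div_const n) fun ω =>
    (sub_min_le_sq_div (hg0 ω) hn).trans (div_le_div_of_nonneg_right (hsq ω) hn.le)

variable {α : Type*} [TopologicalSpace α] [FirstCountableTopology α] [IsFiniteMeasure P]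

theorem continuous_integral_min {g : α → Ω → ℝ} (hg_cont : ∀ ω, Continuous fun x => g x ω)
    (hg_meas : ∀ x, AEStronglyMeasurable (g x) P) (hg0 : ∀ x ω, 0 ≤ g x ω) {n : ℝ} (hn : 0 ≤ n) :
    Continuous fun x => ∫ ω, min (g x ω) n ∂P :=
  continuous_of_dominated (bound := fun _ => n)
    (fun x => (hg_meas x).inf aestronglyMeasurable_const)
    (fun x => ae_of_all _ fun ω => by
      rw [Real.norm_eq_abs, abs_of_nonneg (le_min (hg0 x ω) hn)]
      exact min_le_right _ _)
    (integrable_const n) (ae_of_all _ fun ω => (hg_cont ω).min continuous_const)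

theorem continuous_integral_of_sq_le {g m : α → Ω → ℝ} {B : α → ℝ}
    (hg_cont : ∀ ω, Continuous fun x => g x ω) (hg_meas : ∀ x, AEStronglyMeasurable (g x) P)
    (hg0 : ∀ x ω, 0 ≤ g x ω) (hsq : ∀ x ω, g x ω ^ 2 ≤ m x ω) (hm : ∀ x, Integrable (m x) P)
    (hB : Continuous B) (hmB : ∀ x, ∫ ω, m x ω ∂P ≤ B x) :
    Continuous fun x => ∫ ω, g x ω ∂P := by
  refine continuous_iff_continuousAt.2 fun x₀ => ?_
  set s := {x | B x < B x₀ + 1}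
  have hunif : TendstoUniformlyOn (fun (n : ℕ) x => ∫ ω, min (g x ω) n ∂P)
      (fun x => ∫ ω, g x ω ∂P) atTop s := by
    refine Metric.tendstoUniformlyOn_iff.2 fun ε hε => ?_
    filter_upwards [(tendsto_const_div_atTop_nhds_zero_nat (B x₀ + 1)).eventually_lt_const hε,
      eventually_gt_atTop 0] with n hnε hn x hx
    have hn' : (0 : ℝ) < n := Nat.cast_pos.2 hn
    calc dist (∫ ω, g x ω ∂P) (∫ ω, min (g x ω) n ∂P)
        ≤ (∫ ω, m x ω ∂P) / n := dist_integral_min_le (hg_meas x) (hg0 x) (hsq x) (hm x) hn'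
      _ ≤ (B x₀ + 1) / n := by gcongr; exact (hmB x).trans hx.le
      _ < ε := hnε
  exact (hunif.continuousOn (Frequently.of_forall fun n =>
    (continuous_integral_min hg_cont hg_meas hg0 n.cast_nonneg).continuousOn)).continuousAt
    ((hB.tendsto x₀).eventually_lt_const (lt_add_one _))

end SecondMoment

theorem continuous_integral_of_norm_le {α β G : Type*} [TopologicalSpace α]
    [FirstCountableTopology α] [MeasurableSpace β] [NormedAddCommGroup G] [NormedSpace ℝ G] {μ : Measure β} [IsFiniteMeasure μ]
    {φ : α → β → G} {b : α → ℝ} (hb : Continuous b)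
    (hφ_meas : ∀ x, AEStronglyMeasurable (φ x) μ) (hφ_le : ∀ x, ∀ᵐ t ∂μ, ‖φ x t‖ ≤ b x)
    (hφ_cont : ∀ᵐ t ∂μ, Continuous fun x => φ x t) :
    Continuous fun x => ∫ t, φ x t ∂μ :=
  continuous_iff_continuousAt.2 fun x₀ =>
    continuousAt_of_dominated (bound := fun _ => b x₀ + 1) (Eventually.of_forall hφ_meas)
      ((hb.tendsto x₀).eventually_le_const (lt_add_one _) |>.mono fun x hx =>
        (hφ_le x).mono fun _ ht => ht.trans hx)
      (integrable_const _) (hφ_cont.mono fun _ ht => ht.continuousAt)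

theorem sq_le_of_abs_le_mul_sqrt {a b C : ℝ} (hb : 0 ≤ b) (hab : |a| ≤ C * √b) :
    a ^ 2 ≤ C ^ 2 * b :=
  calc a ^ 2 = |a| ^ 2 := (sq_abs a).symm
    _ ≤ (C * √b) ^ 2 := pow_le_pow_left₀ (abs_nonneg a) hab 2
    _ = C ^ 2 * b := by rw [mul_pow, Real.sq_sqrt hb]

section Flow

variable {E Ω : Type*} [NormedAddCommGroup E] [MeasurableSpace Ω] {P : Measure Ω}
  {X : ℝ → E → Ω → E} {h : E → ℝ} {r t C : ℝ}

theorem integral_one_add_norm_sq_le {Y : Ω → E} {B : ℝ}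
    (hmom : ∫ ω, Real.exp (-2 * r * t) * (1 + ‖Y ω‖ ^ 2) ∂P ≤ B) :
    ∫ ω, (1 + ‖Y ω‖ ^ 2) ∂P ≤ Real.exp (2 * r * t) * B := by
  rw [integral_const_mul] at hmom
  calc ∫ ω, (1 + ‖Y ω‖ ^ 2) ∂P
      = Real.exp (2 * r * t) * (Real.exp (-2 * r * t) * ∫ ω, (1 + ‖Y ω‖ ^ 2) ∂P) := by
        rw [← mul_assoc, ← Real.exp_add, show 2 * r * t + -2 * r * t = 0 by ring,
          Real.exp_zero, one_mul]
    _ ≤ Real.exp (2 * r * t) * B := by gcongr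

variable [MeasurableSpace E] [IsProbabilityMeasure P] (hh : ∀ y, |h y| ≤ C * √(1 + ‖y‖ ^ 2))
  (hmeas : ∀ x, Measurable (X t x)) (hmomInt : ∀ x, Integrable (fun ω => 1 + ‖X t x ω‖ ^ 2) P)
  (hmom : ∀ x, ∫ ω, Real.exp (-2 * r * t) * (1 + ‖X t x ω‖ ^ 2) ∂P ≤ 1 + ‖x‖ ^ 2)
include hh hmeas hmomInt hmom

theorem abs_integral_comp_le (hh_meas : Measurable h) (x : E) :
    |∫ ω, h (X t x ω) ∂P| ≤ C * Real.exp (r * t) * √(1 + ‖x‖ ^ 2) := by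
  have hC : 0 ≤ C := by simpa using (abs_nonneg _).trans (hh 0)
  calc |∫ ω, h (X t x ω) ∂P|
      ≤ √(∫ ω, C ^ 2 * (1 + ‖X t x ω‖ ^ 2) ∂P) :=
        abs_integral_le_sqrt_integral_of_sq_le (hh_meas.comp (hmeas x)).aestronglyMeasurable
          (fun ω => sq_le_of_abs_le_mul_sqrt (by positivity) (hh _)) ((hmomInt x).const_mul _)
    _ ≤ √(C ^ 2 * (Real.exp (2 * r * t) * (1 + ‖x‖ ^ 2))) := by
        rw [integral_const_mul]
        gcongr
        exact integral_one_add_norm_sq_le (hmom x)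
    _ = C * Real.exp (r * t) * √(1 + ‖x‖ ^ 2) := by
        rw [show Real.exp (2 * r * t) = Real.exp (r * t) ^ 2 by rw [sq, ← Real.exp_add]; ring_nf,
          Real.sqrt_mul (by positivity), Real.sqrt_mul (by positivity), Real.sqrt_sq hC,
          Real.sqrt_sq (Real.exp_nonneg _), mul_assoc]

theorem abs_exp_neg_mul_integral_comp_le (hh_meas : Measurable h) (x : E) :
    |Real.exp (-r * t) * ∫ ω, h (X t x ω) ∂P| ≤ C * √(1 + ‖x‖ ^ 2) := by
  rw [abs_mul, Real.abs_exp]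
  calc Real.exp (-r * t) * |∫ ω, h (X t x ω) ∂P|
      ≤ Real.exp (-r * t) * (C * Real.exp (r * t) * √(1 + ‖x‖ ^ 2)) := by
        gcongr
        exact abs_integral_comp_le hh hmeas hmomInt hmom hh_meas x
    _ = C * √(1 + ‖x‖ ^ 2) := by
        rw [mul_comm C, mul_assoc, ← mul_assoc, ← Real.exp_add, neg_mul, neg_add_cancel,
          Real.exp_zero, one_mul]

theorem continuous_integral_comp [OpensMeasurableSpace E]
    (hflow : ∀ ω, Continuous fun x => X t x ω) (hh_cont : Continuous h) (hh0 : ∀ y, 0 ≤ h y) :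
    Continuous fun x => ∫ ω, h (X t x ω) ∂P :=
  continuous_integral_of_sq_le (m := fun x ω => C ^ 2 * (1 + ‖X t x ω‖ ^ 2))
    (B := fun x => C ^ 2 * (Real.exp (2 * r * t) * (1 + ‖x‖ ^ 2)))
    (fun ω => hh_cont.comp (hflow ω))
    (fun x => (hh_cont.measurable.comp (hmeas x)).aestronglyMeasurable) (fun _ _ => hh0 _)
    (fun _ _ => sq_le_of_abs_le_mul_sqrt (by positivity) (hh _))
    (fun x => (hmomInt x).const_mul _) (by fun_prop)
    (fun x => by rw [integral_const_mul]; gcongr; exact integral_one_add_norm_sq_le (hmom x))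

end Flow

theorem stmt4_general {d : ℕ} {Ω : Type*} [MeasurableSpace Ω]
    (P : Measure Ω) [IsProbabilityMeasure P]
    (r p : ℝ) (hp : p ∈ Set.Ioo (0 : ℝ) 1)
    (X : ℝ → EuclideanSpace ℝ (Fin d) → Ω → EuclideanSpace ℝ (Fin d))
    (hflow : ∀ t ω, Continuous fun x => X t x ω)
    (hmeas : ∀ t x, Measurable fun ω => X t x ω)
    (hmom : ∀ t ≥ (0 : ℝ), ∀ x,
      ∫ ω, Real.exp (-2 * r * t) * (1 + ‖X t x ω‖ ^ 2) ∂P ≤ 1 + ‖x‖ ^ 2)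
    (hmomInt : ∀ t x, Integrable (fun ω => 1 + ‖X t x ω‖ ^ 2) P)
    (F : Measure ℝ) [IsProbabilityMeasure F] (hF : F (Set.Iio 0) = 0)
    (ψ f : EuclideanSpace ℝ (Fin d) → ℝ)
    (hψc : Continuous ψ) (hψ0 : ∀ x, 0 ≤ ψ x)
    (hfc : Continuous f) (hf0 : ∀ x, 0 ≤ f x)
    (Cψ Cf : ℝ)
    (hCψ : ∀ x, |ψ x| ≤ Cψ * Real.sqrt (1 + ‖x‖ ^ 2))
    (hCf : ∀ x, |f x| ≤ Cf * Real.sqrt (1 + ‖x‖ ^ 2))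
    (hmeasT : ∀ x, AEStronglyMeasurable
      (fun t => ∫ ω, (p * ψ (X t x ω) + (1 - p) * f (X t x ω)) ∂P) F) :
    Continuous (fun x =>
        ∫ t, Real.exp (-r * t) * ∫ ω, (p * ψ (X t x ω) + (1 - p) * f (X t x ω)) ∂P ∂F)
    ∧ (∀ x, 0 ≤
        ∫ t, Real.exp (-r * t) * ∫ ω, (p * ψ (X t x ω) + (1 - p) * f (X t x ω)) ∂P ∂F)
    ∧ (∀ x, |∫ t, Real.exp (-r * t) *
          ∫ ω, (p * ψ (X t x ω) + (1 - p) * f (X t x ω)) ∂P ∂F|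
        ≤ (p * Cψ + (1 - p) * Cf) * Real.sqrt (1 + ‖x‖ ^ 2)) := by
  set h := fun y => p * ψ y + (1 - p) * f y
  have hh0 : ∀ y, 0 ≤ h y := fun y =>
    add_nonneg (mul_nonneg hp.1.le (hψ0 y)) (mul_nonneg (sub_nonneg.2 hp.2.le) (hf0 y))
  have hh : ∀ y, |h y| ≤ (p * Cψ + (1 - p) * Cf) * √(1 + ‖y‖ ^ 2) := fun y =>
    calc |h y| ≤ p * |ψ y| + (1 - p) * |f y| := by
          rw [abs_of_nonneg (hh0 y), abs_of_nonneg (hψ0 y), abs_of_nonneg (hf0 y)]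
      _ ≤ p * (Cψ * √(1 + ‖y‖ ^ 2)) + (1 - p) * (Cf * √(1 + ‖y‖ ^ 2)) :=
          add_le_add (mul_le_mul_of_nonneg_left (hCψ y) hp.1.le)
            (mul_le_mul_of_nonneg_left (hCf y) (sub_nonneg.2 hp.2.le))
      _ = (p * Cψ + (1 - p) * Cf) * √(1 + ‖y‖ ^ 2) := by ring
  have hh_cont : Continuous h := by fun_prop
  have hF0 : ∀ᵐ t ∂F, 0 ≤ t := ae_iff.2 (measure_mono_null (fun _ => not_le.1) hF)
  have hbound : ∀ x, ∀ᵐ t ∂F, ‖Real.exp (-r * t) * ∫ ω, h (X t x ω) ∂P‖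
      ≤ (p * Cψ + (1 - p) * Cf) * √(1 + ‖x‖ ^ 2) := fun x => hF0.mono fun t ht =>
    abs_exp_neg_mul_integral_comp_le hh (hmeas t) (hmomInt t) (hmom t ht) hh_cont.measurable x
  refine ⟨continuous_integral_of_norm_le (by fun_prop) (fun x => ?_) hbound ?_, fun x => ?_,
    fun x => ?_⟩
  · exact (by fun_prop : Continuous fun t => Real.exp (-r * t)).aestronglyMeasurable.mul (hmeasT x)
  · exact hF0.mono fun t ht => continuous_const.mul <|
      continuous_integral_comp hh (hmeas t) (hmomInt t) (hmom t ht) (hflow t) hh_cont hh0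
  · exact integral_nonneg fun t => mul_nonneg (Real.exp_nonneg _) (integral_nonneg fun ω => hh0 _)
  · simpa using norm_integral_le_of_norm_le_const (hbound x)

/-- Under the moment bound `E[e^{-2rt}(1+‖X^x_t‖²)] ≤ 1+‖x‖²` and continuity of the
stochastic flow `x ↦ X^x_t`, the operator
`(Λ f)(x) = ∫₀^∞ e^{-rt} E[p ψ(X^x_t) + (1-p) f(X^x_t)] F(dt)` maps the weighted
space `A_d` into itself: `Λ f` is continuous, nonnegative, and satisfies
`|(Λf)(x)| ≤ (p‖ψ‖ + (1-p)‖f‖)(1+‖x‖²)^{1/2}`. -/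
theorem stmt4 {d : ℕ} {Ω : Type*} [MeasurableSpace Ω]
    (P : Measure Ω) [IsProbabilityMeasure P]
    (r p : ℝ) (hr : 0 < r) (hp : p ∈ Set.Ioo (0 : ℝ) 1)
    (X : ℝ → EuclideanSpace ℝ (Fin d) → Ω → EuclideanSpace ℝ (Fin d))
    (hflow : ∀ t ω, Continuous fun x => X t x ω)
    (hmeas : ∀ t x, Measurable fun ω => X t x ω)
    (hmom : ∀ t ≥ (0 : ℝ), ∀ x,
      ∫ ω, Real.exp (-2 * r * t) * (1 + ‖X t x ω‖ ^ 2) ∂P ≤ 1 + ‖x‖ ^ 2)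
    (hmomInt : ∀ t x, Integrable (fun ω => 1 + ‖X t x ω‖ ^ 2) P)
    (F : Measure ℝ) [IsProbabilityMeasure F] (hF : F (Set.Iio 0) = 0)
    (ψ f : EuclideanSpace ℝ (Fin d) → ℝ)
    (hψc : Continuous ψ) (hψ0 : ∀ x, 0 ≤ ψ x)
    (hfc : Continuous f) (hf0 : ∀ x, 0 ≤ f x)
    (Cψ Cf : ℝ)
    (hCψ : ∀ x, |ψ x| ≤ Cψ * Real.sqrt (1 + ‖x‖ ^ 2))
    (hCf : ∀ x, |f x| ≤ Cf * Real.sqrt (1 + ‖x‖ ^ 2))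
    (hmeasT : ∀ x, AEStronglyMeasurable
      (fun t => ∫ ω, (p * ψ (X t x ω) + (1 - p) * f (X t x ω)) ∂P) F) :
    Continuous (fun x =>
        ∫ t, Real.exp (-r * t) * ∫ ω, (p * ψ (X t x ω) + (1 - p) * f (X t x ω)) ∂P ∂F)
    ∧ (∀ x, 0 ≤
        ∫ t, Real.exp (-r * t) * ∫ ω, (p * ψ (X t x ω) + (1 - p) * f (X t x ω)) ∂P ∂F)
    ∧ (∀ x, |∫ t, Real.exp (-r * t) *
          ∫ ω, (p * ψ (X t x ω) + (1 - p) * f (X t x ω)) ∂P ∂F|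
        ≤ (p * Cψ + (1 - p) * Cf) * Real.sqrt (1 + ‖x‖ ^ 2)) :=
  stmt4_general P r p hp X hflow hmeas hmom hmomInt F hF ψ f hψc hψ0 hfc hf0 Cψ Cf hCψ hCf hmeasT
end

section
/- Suppose v is a fixed point of the recursive stopping problem with F(0)=1 (zero delay): v(x) = sup_τ E_x[e^{-rτ}(pψ(X_τ)+(1−p)v(X_τ))], the process t ↦ e^{-rt}v(X_t) is a P_x-supermartingale, and v ≥ φ with ψ ≥ φ. Then v(x) = sup_τ E_x[e^{-rτ}ψ(X_τ)] for all x. -/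
open MeasureTheory Set

/-!
Stopping at time `0` in the fixed-point equation gives `p ψ + (1 - p) v ≤ v`, hence `ψ ≤ v`,
so the supermartingale property bounds every `E_x[e^{-rτ} ψ(X_τ)]` by `v x`. Conversely, with
`S = sup_τ E_x[e^{-rτ} ψ(X_τ)]`, splitting the fixed-point integrand and using the
supermartingale property once more gives `v x ≤ p S + (1 - p) v x`, i.e. `v x ≤ S`.
-/

theorem eq_ciSup_of_eq_ciSup_convex_comb {ι : Type*} [Nonempty ι] {a b : ι → ℝ} {c p : ℝ}
    (hp₀ : 0 < p) (hp₁ : p ≤ 1) (ha : BddAbove (range a)) (hac : ∀ i, a i ≤ c)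
    (hbc : ∀ i, b i ≤ c) (hc : c = ⨆ i, (p * a i + (1 - p) * b i)) :
    c = ⨆ i, a i := by
  refine le_antisymm ?_ (ciSup_le hac)
  have hmix : c ≤ p * (⨆ i, a i) + (1 - p) * c :=
    hc.trans_le <| ciSup_le fun i => by nlinarith [le_ciSup ha i, hbc i]
  nlinarith

section DiscountedPayoff

variable {Ω E : Type*} {m : MeasurableSpace Ω}

abbrev RealStoppingTime (ℱ : Filtration ℝ m) :=
  {τ : Ω → ℝ // IsStoppingTime ℱ (fun ω => (τ ω : WithTop ℝ))}

def RealStoppingTime.zero (ℱ : Filtration ℝ m) : RealStoppingTime ℱ :=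
  ⟨fun _ => 0, isStoppingTime_const ℱ 0⟩

instance (ℱ : Filtration ℝ m) : Nonempty (RealStoppingTime ℱ) :=
  ⟨RealStoppingTime.zero ℱ⟩

noncomputable def discountedPayoff (μ : Measure Ω) (X : ℝ → Ω → E) (r : ℝ) (f : E → ℝ)
    (τ : Ω → ℝ) : ℝ :=
  ∫ ω, Real.exp (-r * τ ω) * f (X (τ ω) ω) ∂μ

variable {μ : Measure Ω} {X : ℝ → Ω → E} {r : ℝ} {f g : E → ℝ} {τ : Ω → ℝ}

theorem discountedPayoff_zero [IsProbabilityMeasure μ] {x : E} (hX : ∀ᵐ ω ∂μ, X 0 ω = x) :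
    discountedPayoff μ X r f (fun _ => 0) = f x :=
  calc discountedPayoff μ X r f (fun _ => 0) = ∫ _, f x ∂μ :=
        integral_congr_ae (hX.mono fun ω hω => by simp [hω])
    _ = f x := by simp

theorem discountedPayoff_linearComb (a b : ℝ)
    (hf : Integrable (fun ω => Real.exp (-r * τ ω) * f (X (τ ω) ω)) μ)
    (hg : Integrable (fun ω => Real.exp (-r * τ ω) * g (X (τ ω) ω)) μ) :
    discountedPayoff μ X r (fun y => a * f y + b * g y) τ =
      a * discountedPayoff μ X r f τ + b * discountedPayoff μ X r g τ := by
  simp only [discountedPayoff]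
  rw [← integral_const_mul, ← integral_const_mul, ← integral_add (hf.const_mul a) (hg.const_mul b)]
  congr 1
  ext
  ring

theorem discountedPayoff_mono (hfg : ∀ y, f y ≤ g y)
    (hf : Integrable (fun ω => Real.exp (-r * τ ω) * f (X (τ ω) ω)) μ)
    (hg : Integrable (fun ω => Real.exp (-r * τ ω) * g (X (τ ω) ω)) μ) :
    discountedPayoff μ X r f τ ≤ discountedPayoff μ X r g τ :=
  integral_mono hf hg fun _ => mul_le_mul_of_nonneg_left (hfg _) (Real.exp_nonneg _)

theorem le_of_eq_iSup_discountedPayoff_convex_comb {ℱ : Filtration ℝ m} [IsProbabilityMeasure μ]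
    {ψ v : E → ℝ} {p : ℝ} {x : E} (hp : 0 < p) (hX : ∀ᵐ ω ∂μ, X 0 ω = x)
    (hbdd : BddAbove (range fun τ : RealStoppingTime ℱ =>
      discountedPayoff μ X r (fun y => p * ψ y + (1 - p) * v y) τ.1))
    (hfix : v x = ⨆ τ : RealStoppingTime ℱ,
      discountedPayoff μ X r (fun y => p * ψ y + (1 - p) * v y) τ.1) :
    ψ x ≤ v x := by
  have hzero : discountedPayoff μ X r (fun y => p * ψ y + (1 - p) * v y) (fun _ => 0) ≤ v x :=
    (le_ciSup hbdd (RealStoppingTime.zero ℱ)).trans_eq hfix.symm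
  rw [discountedPayoff_zero hX] at hzero
  nlinarith

end DiscountedPayoff

theorem stmt5_general {d : ℕ} {Ω : Type*} {m : MeasurableSpace Ω}
    (ℱ : Filtration ℝ m)
    (P : EuclideanSpace ℝ (Fin d) → Measure Ω)
    (hP : ∀ x, IsProbabilityMeasure (P x))
    (X : ℝ → Ω → EuclideanSpace ℝ (Fin d))
    (r p : ℝ) (hp : p ∈ Set.Ioo (0 : ℝ) 1)
    (ψ v : EuclideanSpace ℝ (Fin d) → ℝ)
    (hinit : ∀ x, ∀ᵐ ω ∂(P x), X 0 ω = x)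
    (hintψ : ∀ x, ∀ τ : {τ : Ω → ℝ // IsStoppingTime ℱ (fun ω => (τ ω : WithTop ℝ))},
      Integrable (fun ω => Real.exp (-r * τ.1 ω) * ψ (X (τ.1 ω) ω)) (P x))
    (hintv : ∀ x, ∀ τ : {τ : Ω → ℝ // IsStoppingTime ℱ (fun ω => (τ ω : WithTop ℝ))},
      Integrable (fun ω => Real.exp (-r * τ.1 ω) * v (X (τ.1 ω) ω)) (P x))
    (hBddψ : ∀ x, BddAbove (Set.range fun τ : {τ : Ω → ℝ // IsStoppingTime ℱ (fun ω => (τ ω : WithTop ℝ))} =>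
      ∫ ω, Real.exp (-r * τ.1 ω) * ψ (X (τ.1 ω) ω) ∂(P x)))
    (hBddv : ∀ x, BddAbove (Set.range fun τ : {τ : Ω → ℝ // IsStoppingTime ℱ (fun ω => (τ ω : WithTop ℝ))} =>
      ∫ ω, Real.exp (-r * τ.1 ω) *
        (p * ψ (X (τ.1 ω) ω) + (1 - p) * v (X (τ.1 ω) ω)) ∂(P x)))
    (hfix : ∀ x, v x = ⨆ τ : {τ : Ω → ℝ // IsStoppingTime ℱ (fun ω => (τ ω : WithTop ℝ))},
      ∫ ω, Real.exp (-r * τ.1 ω) *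
        (p * ψ (X (τ.1 ω) ω) + (1 - p) * v (X (τ.1 ω) ω)) ∂(P x))
    (hsuper : ∀ x, ∀ τ : {τ : Ω → ℝ // IsStoppingTime ℱ (fun ω => (τ ω : WithTop ℝ))},
      ∫ ω, Real.exp (-r * τ.1 ω) * v (X (τ.1 ω) ω) ∂(P x) ≤ v x) :
    ∀ x, v x = ⨆ τ : {τ : Ω → ℝ // IsStoppingTime ℱ (fun ω => (τ ω : WithTop ℝ))},
      ∫ ω, Real.exp (-r * τ.1 ω) * ψ (X (τ.1 ω) ω) ∂(P x) := by
  intro x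
  have hψv : ∀ y, ψ y ≤ v y := fun y =>
    haveI := hP y
    le_of_eq_iSup_discountedPayoff_convex_comb (ℱ := ℱ) hp.1 (hinit y) (hBddv y) (hfix y)
  have hsplit : v x = ⨆ τ : RealStoppingTime ℱ,
      (p * discountedPayoff (P x) X r ψ τ.1 + (1 - p) * discountedPayoff (P x) X r v τ.1) :=
    (hfix x).trans <| iSup_congr fun τ =>
      discountedPayoff_linearComb p (1 - p) (hintψ x τ) (hintv x τ)
  exact eq_ciSup_of_eq_ciSup_convex_comb hp.1 hp.2.le (hBddψ x)
    (fun τ => (discountedPayoff_mono hψv (hintψ x τ) (hintv x τ)).trans (hsuper x τ))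
    (hsuper x) hsplit

/-- If `v` is a fixed point of the recursive stopping problem with zero delay
(`F(0) = 1`), i.e. `v(x) = sup_τ E_x[e^{-rτ}(pψ(X_τ) + (1-p)v(X_τ))]`, the discounted
value process `t ↦ e^{-rt} v(X_t)` is a `P_x`-supermartingale (expressed through the
optional sampling inequality), and `φ ≤ v`, `φ ≤ ψ`, then
`v(x) = sup_τ E_x[e^{-rτ} ψ(X_τ)]` for every `x`. -/
theorem stmt5 {d : ℕ} {Ω : Type*} {m : MeasurableSpace Ω}
    (ℱ : Filtration ℝ m)
    (P : EuclideanSpace ℝ (Fin d) → Measure Ω)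
    (hP : ∀ x, IsProbabilityMeasure (P x))
    (X : ℝ → Ω → EuclideanSpace ℝ (Fin d))
    (r p : ℝ) (hr : 0 < r) (hp : p ∈ Set.Ioo (0 : ℝ) 1)
    (φ ψ v : EuclideanSpace ℝ (Fin d) → ℝ)
    (hφc : Continuous φ) (hψc : Continuous ψ) (hvc : Continuous v)
    (hφ0 : ∀ x, 0 ≤ φ x) (hφψ : ∀ x, φ x ≤ ψ x) (hφv : ∀ x, φ x ≤ v x)
    (hinit : ∀ x, ∀ᵐ ω ∂(P x), X 0 ω = x)
    (hintψ : ∀ x, ∀ τ : {τ : Ω → ℝ // IsStoppingTime ℱ (fun ω => (τ ω : WithTop ℝ))},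
      Integrable (fun ω => Real.exp (-r * τ.1 ω) * ψ (X (τ.1 ω) ω)) (P x))
    (hintv : ∀ x, ∀ τ : {τ : Ω → ℝ // IsStoppingTime ℱ (fun ω => (τ ω : WithTop ℝ))},
      Integrable (fun ω => Real.exp (-r * τ.1 ω) * v (X (τ.1 ω) ω)) (P x))
    (hBddψ : ∀ x, BddAbove (Set.range fun τ : {τ : Ω → ℝ // IsStoppingTime ℱ (fun ω => (τ ω : WithTop ℝ))} =>
      ∫ ω, Real.exp (-r * τ.1 ω) * ψ (X (τ.1 ω) ω) ∂(P x)))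
    (hBddv : ∀ x, BddAbove (Set.range fun τ : {τ : Ω → ℝ // IsStoppingTime ℱ (fun ω => (τ ω : WithTop ℝ))} =>
      ∫ ω, Real.exp (-r * τ.1 ω) *
        (p * ψ (X (τ.1 ω) ω) + (1 - p) * v (X (τ.1 ω) ω)) ∂(P x)))
    (hfix : ∀ x, v x = ⨆ τ : {τ : Ω → ℝ // IsStoppingTime ℱ (fun ω => (τ ω : WithTop ℝ))},
      ∫ ω, Real.exp (-r * τ.1 ω) *
        (p * ψ (X (τ.1 ω) ω) + (1 - p) * v (X (τ.1 ω) ω)) ∂(P x))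
    (hsuper : ∀ x, ∀ τ : {τ : Ω → ℝ // IsStoppingTime ℱ (fun ω => (τ ω : WithTop ℝ))},
      ∫ ω, Real.exp (-r * τ.1 ω) * v (X (τ.1 ω) ω) ∂(P x) ≤ v x) :
    ∀ x, v x = ⨆ τ : {τ : Ω → ℝ // IsStoppingTime ℱ (fun ω => (τ ω : WithTop ℝ))},
      ∫ ω, Real.exp (-r * τ.1 ω) * ψ (X (τ.1 ω) ω) ∂(P x) :=
  stmt5_general ℱ P hP X r p hp ψ v hinit hintψ hintv hBddψ hBddv hfix hsuper
end
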